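/- A real-linear map A ∈ O(4) acting on ℂ² ≅ ℝ⁴ satisfies that it preserves the Berger metric g(X,Y) = (4/κ)[⟨X,Y⟩ + (4τ²/κ − 1)⟨X,V⟩⟨Y,V⟩] at every point of S³ (with κ ≠ 4τ²) if and only if A∘J = J∘A or A∘J = −J∘A, where J(z,w) = (iz,iw). -/

import Mathlib

/-!
Taking `X = Y = J p` in the invariance of the Berger metric at a unit vector `p` and using that
`A` is orthogonal leaves `⟨A J p, J A p⟩² = 1` (here `κ ≠ 4τ²` is what makes the `V`-term
visible), and equality in Cauchy–Schwarz between the unit vectors `A J p` and `J A p` gives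
`A J p = ± J A p`. By homogeneity this holds at every vector, and a real vector space is not the
union of the two proper subspaces `ker (A J - J A)` and `ker (A J + J A)`, so one sign works
everywhere. Conversely, if `A J = ± J A` then `A` maps `V_p` to `± V_{A p}`, and the sign cancels
in the quadratic term of the metric.
-/

open Complex Real

/-- The real inner product on ℂ² ≅ ℝ⁴. -/
noncomputable def ip (x y : ℂ × ℂ) : ℝ :=
  (x.1 * (starRingEnd ℂ) y.1).re + (x.2 * (starRingEnd ℂ) y.2).re

/-- J(z,w) = (iz, iw); V_p = J p. -/
def Jc (p : ℂ × ℂ) : ℂ × ℂ := (Complex.I * p.1, Complex.I * p.2)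

/-- The Berger metric bilinear form at the point p. -/
noncomputable def gB (κ τ : ℝ) (p X Y : ℂ × ℂ) : ℝ :=
  (4 / κ) * (ip X Y + (4 * τ ^ 2 / κ - 1) * ip X (Jc p) * ip Y (Jc p))

theorem LinearMap.eq_or_eq_neg_of_forall_eq_or_eq_neg {R V W : Type*} [Semiring R]
    [AddCommGroup V] [Module R V] [AddCommGroup W] [Module R W] {f g : V →ₗ[R] W}
    (h : ∀ v, f v = g v ∨ f v = -g v) : f = g ∨ f = -g := by
  by_contra! hfg
  obtain ⟨x, hx⟩ : ∃ x, f x ≠ g x := not_forall.mp fun H => hfg.1 (LinearMap.ext H)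
  obtain ⟨y, hy⟩ : ∃ y, f y ≠ -g y := not_forall.mp fun H => hfg.2 (LinearMap.ext H)
  have hx' : f x = -g x := (h x).resolve_left hx
  have hy' : f y = g y := (h y).resolve_right hy
  rcases h (x + y) with hxy | hxy
  · rw [map_add, map_add, hy'] at hxy
    exact hx (add_right_cancel hxy)
  · rw [map_add, map_add, hx', neg_add] at hxy
    exact hy (add_left_cancel hxy)

noncomputable def JcLinear : (ℂ × ℂ) →ₗ[ℝ] ℂ × ℂ := Complex.I • LinearMap.id

lemma JcLinear_apply (x : ℂ × ℂ) : JcLinear x = Jc x := rfl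

lemma Jc_smul (r : ℝ) (x : ℂ × ℂ) : Jc (r • x) = r • Jc x := JcLinear.map_smul r x

lemma ip_comm (x y : ℂ × ℂ) : ip x y = ip y x := by
  simp [ip, Complex.mul_re]; ring

lemma ip_neg_right (x y : ℂ × ℂ) : ip x (-y) = -ip x y := by
  simp [ip]; ring

lemma ip_smul_left (r : ℝ) (x y : ℂ × ℂ) : ip (r • x) y = r * ip x y := by
  simp [ip, Complex.real_smul, mul_assoc, mul_add]

lemma ip_smul_right (r : ℝ) (x y : ℂ × ℂ) : ip x (r • y) = r * ip x y := by
  rw [ip_comm, ip_smul_left, ip_comm]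

lemma ip_add_add (x y : ℂ × ℂ) : ip (x + y) (x + y) = ip x x + 2 * ip x y + ip y y := by
  simp [ip, Complex.mul_re]; ring

lemma ip_sub_sub (x y : ℂ × ℂ) : ip (x - y) (x - y) = ip x x - 2 * ip x y + ip y y := by
  simp [ip, Complex.mul_re]; ring

lemma ip_self_eq_norm_sq (x : ℂ × ℂ) : ip x x = ‖x.1‖ ^ 2 + ‖x.2‖ ^ 2 := by
  simp [ip, Complex.sq_norm, Complex.normSq_apply]

lemma ip_self_nonneg (x : ℂ × ℂ) : 0 ≤ ip x x := by
  rw [ip_self_eq_norm_sq]; positivity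

lemma ip_self_eq_zero {x : ℂ × ℂ} : ip x x = 0 ↔ x = 0 := by
  rw [ip_self_eq_norm_sq, add_eq_zero_iff_of_nonneg (by positivity) (by positivity)]
  simp [Prod.ext_iff]

lemma ip_Jc_Jc (x y : ℂ × ℂ) : ip (Jc x) (Jc y) = ip x y := by
  simp [ip, Jc, Complex.mul_re]

lemma ip_Jc_self (x : ℂ × ℂ) : ip (Jc x) x = 0 := by
  simp [ip, Jc, Complex.mul_re]; ring

lemma exists_ne_zero_ip_smul_self_eq_one {v : ℂ × ℂ} (hv : v ≠ 0) :
    ∃ c : ℝ, c ≠ 0 ∧ ip (c • v) (c • v) = 1 := by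
  have hpos : 0 < ip v v := (ip_self_nonneg v).lt_of_ne' (mt ip_self_eq_zero.mp hv)
  refine ⟨(√(ip v v))⁻¹, inv_ne_zero (Real.sqrt_pos.mpr hpos).ne', ?_⟩
  rw [ip_smul_left, ip_smul_right, ← mul_assoc, ← mul_inv, Real.mul_self_sqrt hpos.le,
    inv_mul_cancel₀ hpos.ne']

lemma eq_or_eq_neg_of_ip_sq_eq {x y : ℂ × ℂ} (hxy : ip x x = ip y y)
    (h : ip x y ^ 2 = ip x x ^ 2) : x = y ∨ x = -y := by
  rcases sq_eq_sq_iff_eq_or_eq_neg.mp h with h | h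
  · left
    rw [← sub_eq_zero, ← ip_self_eq_zero, ip_sub_sub]
    linarith
  · right
    rw [← add_eq_zero_iff_eq_neg, ← ip_self_eq_zero, ip_add_add]
    linarith

lemma ip_map_Jc_sq_of_gB_eq {κ τ : ℝ} (hκ : κ ≠ 0) (hne : κ ≠ 4 * τ ^ 2)
    {A : ℂ × ℂ → ℂ × ℂ} (hA : ∀ x y, ip (A x) (A y) = ip x y) {p : ℂ × ℂ}
    (H : gB κ τ (A p) (A (Jc p)) (A (Jc p)) = gB κ τ p (Jc p) (Jc p)) :
    ip (A (Jc p)) (Jc (A p)) ^ 2 = ip p p ^ 2 := by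
  have hlam : 4 * τ ^ 2 / κ - 1 ≠ 0 := by
    rw [sub_ne_zero, ne_eq, div_eq_one_iff_eq hκ]
    exact hne.symm
  simp only [gB, hA, ip_Jc_Jc] at H
  have H' := mul_left_cancel₀ (div_ne_zero four_ne_zero hκ) H
  exact mul_left_cancel₀ hlam (by linear_combination H')

lemma map_Jc_eq_or_eq_neg_of_gB_eq {κ τ : ℝ} (hκ : κ ≠ 0) (hne : κ ≠ 4 * τ ^ 2)
    {A : ℂ × ℂ → ℂ × ℂ} (hA : ∀ x y, ip (A x) (A y) = ip x y) {p : ℂ × ℂ}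
    (H : gB κ τ (A p) (A (Jc p)) (A (Jc p)) = gB κ τ p (Jc p) (Jc p)) :
    A (Jc p) = Jc (A p) ∨ A (Jc p) = -Jc (A p) := by
  have hnorm : ip (A (Jc p)) (A (Jc p)) = ip p p := by rw [hA, ip_Jc_Jc]
  refine eq_or_eq_neg_of_ip_sq_eq (by rw [hnorm, ip_Jc_Jc, hA]) ?_
  rw [hnorm]
  exact ip_map_Jc_sq_of_gB_eq hκ hne hA H

lemma map_Jc_eq_or_eq_neg_of_forall_gB_eq {κ τ : ℝ} (hκ : κ ≠ 0) (hne : κ ≠ 4 * τ ^ 2)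
    {A : (ℂ × ℂ) →ₗ[ℝ] ℂ × ℂ} (hA : ∀ x y, ip (A x) (A y) = ip x y)
    (H : ∀ p, ip p p = 1 → gB κ τ (A p) (A (Jc p)) (A (Jc p)) = gB κ τ p (Jc p) (Jc p))
    (v : ℂ × ℂ) : A (Jc v) = Jc (A v) ∨ A (Jc v) = -Jc (A v) := by
  rcases eq_or_ne v 0 with rfl | hv
  · left; simp [← JcLinear_apply]
  obtain ⟨c, hc, hcv⟩ := exists_ne_zero_ip_smul_self_eq_one hv
  have hdich := map_Jc_eq_or_eq_neg_of_gB_eq hκ hne hA (H _ hcv)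
  rw [Jc_smul, map_smul, map_smul, Jc_smul, ← smul_neg] at hdich
  exact hdich.imp (smul_right_injective _ hc ·) (smul_right_injective _ hc ·)

lemma gB_map_of_commute_or_anticommute {κ τ : ℝ} {A : ℂ × ℂ → ℂ × ℂ}
    (hA : ∀ x y, ip (A x) (A y) = ip x y)
    (hJ : (∀ x, A (Jc x) = Jc (A x)) ∨ ∀ x, A (Jc x) = -Jc (A x)) (p X Y : ℂ × ℂ) :
    gB κ τ (A p) (A X) (A Y) = gB κ τ p X Y := by
  rcases hJ with hJ | hJ
  · simp only [gB, ← hJ, hA]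
  · have hJ' : Jc (A p) = -A (Jc p) := by rw [hJ, neg_neg]
    simp only [gB, hJ', ip_neg_right, hA]
    ring

theorem orthogonal_preserves_berger_iff_commutes_J_general
    (κ τ : ℝ) (hκ : 0 < κ) (hne : κ ≠ 4 * τ ^ 2)
    (A : (ℂ × ℂ) →ₗ[ℝ] ℂ × ℂ) (hA : ∀ x y : ℂ × ℂ, ip (A x) (A y) = ip x y) :
    (∀ p : ℂ × ℂ, ‖p.1‖ ^ 2 + ‖p.2‖ ^ 2 = 1 →
      ∀ X Y : ℂ × ℂ, ip X p = 0 → ip Y p = 0 →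
        gB κ τ (A p) (A X) (A Y) = gB κ τ p X Y) ↔
    ((∀ x : ℂ × ℂ, A (Jc x) = Jc (A x)) ∨ (∀ x : ℂ × ℂ, A (Jc x) = - Jc (A x))) := by
  constructor
  · intro H
    have hdich := map_Jc_eq_or_eq_neg_of_forall_gB_eq hκ.ne' hne hA fun p hp =>
      H p (by rwa [← ip_self_eq_norm_sq]) _ _ (ip_Jc_self p) (ip_Jc_self p)
    rcases LinearMap.eq_or_eq_neg_of_forall_eq_or_eq_neg
      (f := A ∘ₗ JcLinear) (g := JcLinear ∘ₗ A) hdich with h | h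
    · exact Or.inl (LinearMap.congr_fun h)
    · exact Or.inr (LinearMap.congr_fun h)
  · intro hJ p _ X Y _ _
    exact gB_map_of_commute_or_anticommute hA hJ p X Y

/-- A real-linear orthogonal map A of ℝ⁴ ≅ ℂ² preserves the Berger metric at
every point of S³ (for κ ≠ 4τ²) iff A∘J = J∘A or A∘J = -J∘A. -/
theorem orthogonal_preserves_berger_iff_commutes_J
    (κ τ : ℝ) (hκ : 0 < κ) (hτ : τ ≠ 0) (hne : κ ≠ 4 * τ ^ 2)
    (A : (ℂ × ℂ) →ₗ[ℝ] ℂ × ℂ) (hA : ∀ x y : ℂ × ℂ, ip (A x) (A y) = ip x y) :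
    (∀ p : ℂ × ℂ, ‖p.1‖ ^ 2 + ‖p.2‖ ^ 2 = 1 →
      ∀ X Y : ℂ × ℂ, ip X p = 0 → ip Y p = 0 →
        gB κ τ (A p) (A X) (A Y) = gB κ τ p X Y) ↔
    ((∀ x : ℂ × ℂ, A (Jc x) = Jc (A x)) ∨ (∀ x : ℂ × ℂ, A (Jc x) = - Jc (A x))) :=
  orthogonal_preserves_berger_iff_commutes_J_general κ τ hκ hne A hA
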